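/- Consider a finite control system with transition f : Fin M → Fin N → Fin N and output h : Fin N → Fin P, and a T-periodic reference output trajectory y_r : ℕ → Fin P. Suppose there exists a family of finite state trajectories {x^(ℓ)}_{ℓ ∈ L} indexed by a nonempty set L, each of length T and each satisfying: (C1) h(x^(ℓ)_t) = y_r(t+1) for all t ∈ Fin T, with consecutive states connected by some input; and (C2) for each ℓ there exist ℓ' ∈ L and an input i with f i (x^(ℓ)_{T-1}) = x^(ℓ')_0. Then for every ℓ ∈ L the T-periodic output trajectory is trackable starting from time 1 at state x^(ℓ)_0, i.e., there exists an infinite input sequence producing an infinite state trajectory x with x(1) = x^(ℓ)_0 and h(x(t)) = y_r(t) for all t ≥ 1. -/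
import Mathlib


theorem stmt_6 {N M P T : ℕ} (hT : 1 ≤ T)
    (f : Fin M → Fin N → Fin N) (h : Fin N → Fin P)
    (yr : ℕ → Fin P) (hper : ∀ t, yr (t + T) = yr t)
    (L : Type*) (hL : Nonempty L)
    (xfam : L → Fin T → Fin N)
    -- (C1): each trajectory is compatible with the reference output over one period
    (hC1out : ∀ (ℓ : L) (t : Fin T), h (xfam ℓ t) = yr ((t : ℕ) + 1))
    (hC1con : ∀ (ℓ : L) (t : ℕ) (ht : t + 1 < T),
      ∃ i : Fin M, f i (xfam ℓ ⟨t, by omega⟩) = xfam ℓ ⟨t + 1, ht⟩)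
    -- (C2): the terminal state of each trajectory has a successor among the initial states
    (hC2 : ∀ ℓ : L, ∃ (ℓ' : L) (i : Fin M),
      f i (xfam ℓ ⟨T - 1, by omega⟩) = xfam ℓ' ⟨0, hT⟩) :
    ∀ ℓ : L, ∃ z : ℕ → Fin N,
      z 1 = xfam ℓ ⟨0, hT⟩ ∧
      (∀ t : ℕ, 1 ≤ t → h (z t) = yr t) ∧
      ∀ t : ℕ, 1 ≤ t → ∃ i : Fin M, f i (z t) = z (t + 1) := by
  intro ℓ0
  choose nxt inp hnxt using hC2
  set seq : ℕ → L := fun k => Nat.rec ℓ0 (fun _ l => nxt l) k with hseqdef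
  have hseq : ∀ k, seq (k + 1) = nxt (seq k) := fun k => rfl
  have hper' : ∀ k t, yr (t + k * T) = yr t := by
    intro k
    induction k with
    | zero => intro t; simp
    | succ k ih =>
      intro t
      have : t + (k + 1) * T = t + k * T + T := by ring
      rw [this, hper, ih]
  refine ⟨fun t => xfam (seq ((t - 1) / T)) ⟨(t - 1) % T, Nat.mod_lt _ (by omega)⟩,
    ?_, ?_, ?_⟩
  · have h0 : (1 - 1) / T = 0 := by simp
    have h1 : (1 - 1) % T = 0 := by simp
    simp only [h0, h1]
    rfl
  · intro t ht
    rw [hC1out]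
    have e1 : (t - 1) % T + 1 + (t - 1) / T * T = t := by
      have h2 := Nat.mod_add_div' (t - 1) T
      omega
    have : yr ((t - 1) % T + 1) = yr t := by
      conv_rhs => rw [← e1]
      exact (hper' _ _).symm
    exact this
  · intro t ht
    obtain ⟨q, hq⟩ : ∃ q, (t - 1) / T = q := ⟨_, rfl⟩
    obtain ⟨r, hr⟩ : ∃ r, (t - 1) % T = r := ⟨_, rfl⟩
    have hrT : r < T := hr ▸ Nat.mod_lt _ (by omega)
    have hdm : T * q + r = t - 1 := by rw [← hq, ← hr]; exact Nat.div_add_mod _ _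
    by_cases hc : r + 1 < T
    · -- stay within the same trajectory
      have hq' : (t + 1 - 1) / T = q := by
        rw [show t + 1 - 1 = T * q + (r + 1) by omega]
        rw [Nat.mul_add_div (by omega), Nat.div_eq_of_lt hc]
        omega
      have hr' : (t + 1 - 1) % T = r + 1 := by
        rw [show t + 1 - 1 = T * q + (r + 1) by omega]
        rw [Nat.mul_add_mod, Nat.mod_eq_of_lt hc]
      obtain ⟨i, hi⟩ := hC1con (seq q) r hc
      exact ⟨i, by simp only [hq, hr, hq', hr']; exact hi⟩
    · -- wrap to the next trajectory
      have hrtop : r = T - 1 := by omega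
      have hq' : (t + 1 - 1) / T = q + 1 := by
        rw [show t + 1 - 1 = T * q + T by omega, ← Nat.mul_succ]
        exact Nat.mul_div_cancel_left _ (by omega)
      have hr' : (t + 1 - 1) % T = 0 := by
        rw [show t + 1 - 1 = T * q + T by omega, ← Nat.mul_succ]
        exact Nat.mul_mod_right _ _
      refine ⟨inp (seq q), ?_⟩
      simp only [hq, hr, hq', hr', hseq]
      rw [show (⟨r, hrT⟩ : Fin T) = ⟨T - 1, by omega⟩ from by simp [hrtop]]
      exact hnxt (seq q)
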